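/- arXiv:2102.01353 — 2 statements merged into one kernel-verified Lean document; each statement's English description precedes it below -/
import Mathlib

section
/- Let N be a positive integer and for each i ∈ {1,…,N} let C^i be a set of M-dimensional real vectors (the cost vectors of the individual paths of agent i). Let c^i ∈ C^i for each i and suppose the sum Σ_{i=1}^N c^i is non-dominated within the sumset {Σ_{i=1}^N d^i : d^i ∈ C^i for each i}. Then for every j ∈ {1,…,N}, the vector c^j is non-dominated within C^j. (This justifies MOM*'s Pareto policies: every Pareto-optimal joint path, when agent–agent conflicts are ignored, is composed of individually Pareto-optimal paths.) -/
/-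
Replacing the cost of agent `j` by a vector dominating it changes the joint cost by the same
difference in every component, so the joint cost would be dominated as well.
-/

/-- `a` dominates `b`: componentwise `a ≤ b`, strictly in at least one component. -/
def Dominates {M : ℕ} (a b : Fin M → ℝ) : Prop :=
  (∀ m, a m ≤ b m) ∧ ∃ m, a m < b m

theorem Dominates.add_right {M : ℕ} {a b : Fin M → ℝ} (h : Dominates a b) (v : Fin M → ℝ) :
    Dominates (a + v) (b + v) := by
  obtain ⟨hle, m, hlt⟩ := h
  exact ⟨fun k => by simpa using hle k, m, by simpa using hlt⟩

theorem Dominates.sum_update {ι : Type*} [Fintype ι] [DecidableEq ι] {M : ℕ}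
    (c : ι → Fin M → ℝ) {j : ι} {x : Fin M → ℝ} (h : Dominates x (c j)) :
    Dominates (∑ i, Function.update c j x i) (∑ i, c i) := by
  have hupd : ∑ i, Function.update c j x i = x + ∑ i ∈ Finset.univ.erase j, c i := by
    rw [Finset.sum_update_of_mem (Finset.mem_univ j), Finset.sdiff_singleton_eq_erase]
  rw [hupd, ← Finset.add_sum_erase _ _ (Finset.mem_univ j)]
  exact h.add_right _

theorem pareto_joint_implies_pareto_individual_general (M N : ℕ)
    (C : Fin N → Set (Fin M → ℝ)) (c : Fin N → Fin M → ℝ)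
    (hc : ∀ i, c i ∈ C i)
    (hnd : ∀ d : Fin N → Fin M → ℝ, (∀ i, d i ∈ C i) →
      ¬ Dominates (∑ i, d i) (∑ i, c i)) :
    ∀ j, ∀ x ∈ C j, ¬ Dominates x (c j) := by
  intro j x hx hdom
  have hmem : ∀ i, Function.update c j x i ∈ C i := by
    intro i
    rcases eq_or_ne i j with rfl | hij
    · simpa using hx
    · simpa [Function.update_of_ne hij] using hc i
  exact hnd _ hmem (hdom.sum_update c)

/-- If the joint cost `∑ i, c i` is non-dominated within the sumset
`{∑ i, d i : d i ∈ C i}`, then each individual cost `c j` is non-dominated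
within `C j`. (Pareto-optimal joint paths consist of individually
Pareto-optimal paths.) -/
theorem pareto_joint_implies_pareto_individual (M N : ℕ) (hM : 0 < M) (hN : 0 < N)
    (C : Fin N → Set (Fin M → ℝ)) (c : Fin N → Fin M → ℝ)
    (hc : ∀ i, c i ∈ C i)
    (hnd : ∀ d : Fin N → Fin M → ℝ, (∀ i, d i ∈ C i) →
      ¬ Dominates (∑ i, d i) (∑ i, c i)) :
    ∀ j, ∀ x ∈ C j, ¬ Dominates x (c j) :=
  pareto_joint_implies_pareto_individual_general M N C c hc hnd
end

section
/- Let V be a finite set of vertices, adj a relation on V, ε > 0, and cost a function assigning to every pair (u,v) with adj(u,v) an M-dimensional real vector with every component at least ε. Fix u, v ∈ V and a bound B ≥ 0. Then the set of walks from u to v whose cost vector has some component at most B is finite. (This supports the finite-time termination of MOM*: only finitely many partial solutions can have a cost vector not dominated by a fixed bound.) -/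
/-- The cost vector of a walk represented as a list of vertices: the sum of
the edge cost vectors along consecutive pairs. -/
def walkCost {V : Type*} {M : ℕ} (cost : V → V → Fin M → ℝ) : List V → (Fin M → ℝ)
  | [] => 0
  | [_] => 0
  | a :: b :: rest => cost a b + walkCost cost (b :: rest)

lemma walkCost_lower {V : Type*} {M : ℕ} (adj : V → V → Prop) (ε : ℝ)
    (cost : V → V → Fin M → ℝ)
    (hcost : ∀ a b, adj a b → ∀ m, ε ≤ cost a b m) :
    ∀ L : List V, L.Chain' adj → ∀ m, ((L.length - 1 : ℕ) : ℝ) * ε ≤ walkCost cost L m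
  | [], _, m => by simp [walkCost]
  | [a], _, m => by simp [walkCost]
  | a :: b :: rest, h, m => by
    rw [List.Chain', List.isChain_cons_cons] at h
    have ih := walkCost_lower adj ε cost hcost (b :: rest) h.2 m
    have h1 := hcost a b h.1 m
    show ((rest.length + 1 : ℕ) : ℝ) * ε ≤ cost a b m + walkCost cost (b :: rest) m
    push_cast
    have : ((rest.length : ℕ) : ℝ) * ε ≤ walkCost cost (b :: rest) m := by
      simpa using ih
    nlinarith

/-- In a finite graph with edge cost components bounded below by `ε > 0`, the
set of walks from `u` to `v` whose cost vector has some component at most `B`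
is finite. -/
theorem walks_with_bounded_cost_finite (M : ℕ) (hM : 0 < M)
    (V : Type*) [Fintype V] (adj : V → V → Prop)
    (ε : ℝ) (hε : 0 < ε)
    (cost : V → V → Fin M → ℝ)
    (hcost : ∀ a b, adj a b → ∀ m, ε ≤ cost a b m)
    (u v : V) (B : ℝ) (hB : 0 ≤ B) :
    { L : List V | L.head? = some u ∧ L.getLast? = some v ∧ L.Chain' adj ∧
        ∃ m, walkCost cost L m ≤ B }.Finite := by
  apply Set.Finite.subset (List.finite_length_le V (⌊B / ε⌋₊ + 1))
  rintro L ⟨-, -, hchain, m, hle⟩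
  have hlow := walkCost_lower adj ε cost hcost L hchain m
  have h2 : ((L.length - 1 : ℕ) : ℝ) ≤ B / ε := by
    rw [le_div_iff₀ hε]; linarith
  have h3 : L.length - 1 ≤ ⌊B / ε⌋₊ := Nat.le_floor h2
  simp only [Set.mem_setOf_eq]
  omega
end
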